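/- Let (π, H) be a strict ground state representation of (G, α) and let (ρ, F) be a subrepresentation on a closed invariant subspace F that is itself a ground state representation with minimal energy space F⁰ = F ∩ H⁰. Then (ρ, F) is also strict: every bounded operator on F⁰ commuting with ρ⁰(G⁰) extends to a bounded operator on F commuting with ρ(G). -/

import Mathlib

/-- The space of fixed vectors of a one-parameter group of operators; for a positive
energy representation `U_t = e^{itH₀}` this is the minimal energy subspace `ker H₀`. -/
def fixedPts {H : Type*} [NormedAddCommGroup H] [InnerProductSpace ℂ H]
    (U : ℝ → H →L[ℂ] H) : Submodule ℂ H where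
  carrier := {x | ∀ t : ℝ, U t x = x}
  add_mem' := fun ha hb t => by simp [map_add, ha t, hb t]
  zero_mem' := fun t => by simp
  smul_mem' := fun c x hx t => by simp [map_smul, hx t]

/-- A strongly continuous unitary one-parameter group `U_t = e^{itH₀}` has non-negative
generator `H₀ ≥ 0` iff `∫ f(t) ⟨x, U_t x⟩ dt = 0` for every integrable `f` whose Fourier
transform `f̂(s) = ∫ f(t) e^{ist} dt` vanishes on `[0,∞)`. -/
def NonnegGen {H : Type*} [NormedAddCommGroup H] [InnerProductSpace ℂ H]
    (U : ℝ → H →L[ℂ] H) : Prop :=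
  ∀ f : ℝ → ℂ, MeasureTheory.Integrable f →
    (∀ s : ℝ, 0 ≤ s → (∫ t : ℝ, f t * Complex.exp (Complex.I * (s * t))) = 0) →
    ∀ x : H, (∫ t : ℝ, f t * (inner ℂ x (U t x) : ℂ)) = 0

/-- A ground state representation of `(G,α)`. -/
def IsGroundStateRep {G : Type*} [Group G]
    {H : Type*} [NormedAddCommGroup H] [InnerProductSpace ℂ H] [CompleteSpace H]
    (α : ℝ → G → G) (π : G → H →L[ℂ] H) (U : ℝ → H →L[ℂ] H) : Prop :=
  π 1 = 1 ∧ (∀ g h : G, π (g * h) = π g * π h) ∧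
  (∀ g : G, π g ∈ unitary (H →L[ℂ] H)) ∧
  U 0 = 1 ∧ (∀ s t : ℝ, U (s + t) = U s * U t) ∧
  (∀ t : ℝ, U t ∈ unitary (H →L[ℂ] H)) ∧
  (∀ x : H, Continuous fun t : ℝ => U t x) ∧
  NonnegGen U ∧
  (∀ (t : ℝ) (g : G), U t * π g = π (α t g) * U t) ∧
  (Submodule.span ℂ
    {y : H | ∃ (g : G) (x : H), x ∈ fixedPts U ∧ y = π g x}).topologicalClosure = ⊤

/-- Strictness of a ground state representation. -/
def IsStrict {G : Type*} [Group G]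
    {H : Type*} [NormedAddCommGroup H] [InnerProductSpace ℂ H] [CompleteSpace H]
    (α : ℝ → G → G) (π : G → H →L[ℂ] H) (U : ℝ → H →L[ℂ] H) : Prop :=
  ∀ B : H →L[ℂ] H,
    (∀ x : H, B x ∈ fixedPts U) →
    (∀ x ∈ (fixedPts U)ᗮ, B x = 0) →
    (∀ g : G, (∀ t : ℝ, α t g = g) → ∀ x ∈ fixedPts U, B (π g x) = π g (B x)) →
    ∃ A : H →L[ℂ] H,
      (∀ g : G, A * π g = π g * A) ∧ ∀ x ∈ fixedPts U, A x = B x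

/-!
Let `F⁰ = F ∩ H⁰`. A `ρ⁰(G⁰)`-equivariant operator `B` on `F⁰`, extended by zero, is still
`π⁰(G⁰)`-equivariant on `H⁰`, because `π(G⁰)` is unitary and preserves `F⁰` and hence also its
orthogonal complement. Strictness of `(π, H)` extends it to an operator `A` commuting with `π(G)`.
Since `F` is the closed span of `π(G)F⁰` and `A` maps `F⁰` into `F`, `A` leaves `F` invariant, and
its compression `A P_F` is the required extension.
-/

open ContinuousLinearMap Submodule

section FixedPts

variable {H : Type*} [NormedAddCommGroup H] [InnerProductSpace ℂ H]

theorem isClosed_fixedPts (U : ℝ → H →L[ℂ] H) : IsClosed (fixedPts U : Set H) := by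
  have h : (fixedPts U : Set H) = ⋂ t, {x | U t x = x} := by ext; simp [fixedPts]
  rw [h]
  exact isClosed_iInter fun t => isClosed_eq (U t).continuous continuous_id

theorem map_mem_fixedPts_of_commute {U : ℝ → H →L[ℂ] H} {T : H →L[ℂ] H}
    (hT : ∀ t, Commute (U t) T) {x : H} (hx : x ∈ fixedPts U) : T x ∈ fixedPts U := fun t => by
  simpa [hx t] using congr($((hT t).eq) x)

end FixedPts

theorem Submodule.mapsTo_of_topologicalClosure_span_eq {R M : Type*} [Semiring R]
    [TopologicalSpace M] [AddCommMonoid M] [Module R M] [ContinuousAdd M]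
    [ContinuousConstSMul R M] {S : Set M} {F : Submodule R M}
    (hF : (span R S).topologicalClosure = F) {A : M →L[R] M} (hA : ∀ x ∈ S, A x ∈ F) :
    Set.MapsTo A F F := by
  have hFclosed : IsClosed (F : Set M) := hF ▸ isClosed_topologicalClosure _
  have hle : F ≤ F.comap (A : M →ₗ[R] M) := hF.symm.le.trans <|
    topologicalClosure_minimal _ (span_le.2 hA) (hFclosed.preimage A.continuous)
  exact fun _ hx => hle hx

section Hilbert

variable {𝕜 E : Type*} [RCLike 𝕜] [NormedAddCommGroup E] [InnerProductSpace 𝕜 E]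

theorem ContinuousLinearMap.apply_map_eq_map_apply_of_orthogonal {K : Submodule 𝕜 E}
    [K.HasOrthogonalProjection] {B T : E →L[𝕜] E} (hB : ∀ z ∈ Kᗮ, B z = 0)
    (hT : ∀ z ∈ Kᗮ, T z ∈ Kᗮ) (hBT : ∀ y ∈ K, B (T y) = T (B y)) (x : E) :
    B (T x) = T (B x) := by
  obtain ⟨y, hy, z, hz, rfl⟩ := K.exists_add_mem_mem_orthogonal x
  simp [hB z hz, hB _ (hT z hz), hBT y hy]

variable [CompleteSpace E]

theorem ContinuousLinearMap.adjoint_eq_of_mem_unitary {T S : E →L[𝕜] E}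
    (hT : T ∈ unitary (E →L[𝕜] E)) (hTS : T * S = 1) : adjoint T = S := by
  rw [← star_eq_adjoint]
  exact left_inv_eq_right_inv (Unitary.star_mul_self_of_mem hT) hTS

theorem ContinuousLinearMap.map_mem_orthogonal {K : Submodule 𝕜 E} (T : E →L[𝕜] E)
    (hT : ∀ w ∈ K, adjoint T w ∈ K) {z : E} (hz : z ∈ Kᗮ) : T z ∈ Kᗮ := fun w hw => by
  rw [← adjoint_inner_left]
  exact hz _ (hT w hw)

end Hilbert

namespace IsGroundStateRep

variable {G : Type*} [Group G] {H : Type*} [NormedAddCommGroup H] [InnerProductSpace ℂ H]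
  [CompleteSpace H] {α : ℝ → G → G} {π : G → H →L[ℂ] H} {U : ℝ → H →L[ℂ] H}

theorem map_mul_map_inv (hgs : IsGroundStateRep α π U) (g : G) : π g * π g⁻¹ = 1 := by
  obtain ⟨hπ_one, hπ_mul, -⟩ := hgs
  rw [← hπ_mul, mul_inv_cancel, hπ_one]

theorem map_inv_mul_map (hgs : IsGroundStateRep α π U) (g : G) : π g⁻¹ * π g = 1 := by
  obtain ⟨hπ_one, hπ_mul, -⟩ := hgs
  rw [← hπ_mul, inv_mul_cancel, hπ_one]

theorem adjoint_map (hgs : IsGroundStateRep α π U) (g : G) : adjoint (π g) = π g⁻¹ := by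
  have hπ_inv := hgs.map_mul_map_inv g
  obtain ⟨-, -, hπ_unitary, -⟩ := hgs
  exact adjoint_eq_of_mem_unitary (hπ_unitary g) hπ_inv

theorem commute_map_of_forall_eq (hgs : IsGroundStateRep α π U) {g : G}
    (hg : ∀ t, α t g = g) (t : ℝ) : Commute (U t) (π g) := by
  obtain ⟨-, -, -, -, -, -, -, -, hcov, -⟩ := hgs
  rw [Commute, SemiconjBy, hcov t g, hg t]

theorem commute_map_inv_of_forall_eq (hgs : IsGroundStateRep α π U) {g : G}
    (hg : ∀ t, α t g = g) (t : ℝ) : Commute (U t) (π g⁻¹) :=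
  Commute.units_inv_right (u := ⟨π g, π g⁻¹, hgs.map_mul_map_inv g, hgs.map_inv_mul_map g⟩)
    (hgs.commute_map_of_forall_eq hg t)

theorem map_mem_orthogonal_inf_fixedPts (hgs : IsGroundStateRep α π U) {F : Submodule ℂ H}
    (hFπ : ∀ g : G, ∀ x ∈ F, π g x ∈ F) {g : G} (hg : ∀ t, α t g = g) {z : H}
    (hz : z ∈ (F ⊓ fixedPts U)ᗮ) : π g z ∈ (F ⊓ fixedPts U)ᗮ :=
  (π g).map_mem_orthogonal (fun _ hw => hgs.adjoint_map g ▸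
    ⟨hFπ _ _ hw.1, map_mem_fixedPts_of_commute (hgs.commute_map_inv_of_forall_eq hg) hw.2⟩) hz

end IsGroundStateRep

theorem stmt_11_general {G : Type*} [Group G]
    {H : Type*} [NormedAddCommGroup H] [InnerProductSpace ℂ H] [CompleteSpace H]
    (α : ℝ → G → G)
    (π : G → H →L[ℂ] H) (U : ℝ → H →L[ℂ] H)
    (hgs : IsGroundStateRep α π U) (hstr : IsStrict α π U)
    (F : Submodule ℂ H)
    (hFπ : ∀ g : G, ∀ x ∈ F, π g x ∈ F)
    -- the subrepresentation on `F` is a ground state representation with `F⁰ = F ∩ H⁰`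
    (hFtotal : (Submodule.span ℂ {y : H | ∃ (g : G) (x : H),
        x ∈ F ⊓ fixedPts U ∧ y = π g x}).topologicalClosure = F) :
    ∀ B : H →L[ℂ] H,
      (∀ x : H, B x ∈ F ⊓ fixedPts U) →
      (∀ x ∈ (F ⊓ fixedPts U)ᗮ, B x = 0) →
      (∀ g : G, (∀ t : ℝ, α t g = g) → ∀ x ∈ F ⊓ fixedPts U, B (π g x) = π g (B x)) →
      ∃ A : H →L[ℂ] H,
        (∀ x : H, A x ∈ F) ∧ (∀ x ∈ Fᗮ, A x = 0) ∧
        (∀ g : G, ∀ x ∈ F, A (π g x) = π g (A x)) ∧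
        (∀ x ∈ F ⊓ fixedPts U, A x = B x) := by
  intro B hB_mem hB_perp hB_equiv
  have hFclosed : IsClosed (F : Set H) := hFtotal ▸ isClosed_topologicalClosure _
  have : CompleteSpace F := hFclosed.completeSpace_coe
  have : CompleteSpace ↥(F ⊓ fixedPts U) :=
    (hFclosed.inter (isClosed_fixedPts U)).completeSpace_coe
  obtain ⟨A, hA_comm, hA_eq⟩ := hstr B (fun x => (hB_mem x).2)
    (fun x hx => hB_perp x (orthogonal_le inf_le_right hx))
    (fun g hg x _ => B.apply_map_eq_map_apply_of_orthogonal hB_perp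
      (fun _ => hgs.map_mem_orthogonal_inf_fixedPts hFπ hg) (hB_equiv g hg) x)
  have hA_apply (g : G) (x : H) : A (π g x) = π g (A x) := by
    simpa using congr($(hA_comm g) x)
  have hAF : Set.MapsTo A F F := mapsTo_of_topologicalClosure_span_eq hFtotal <| by
    rintro _ ⟨g, x, hx, rfl⟩
    rw [hA_apply, hA_eq x hx.2]
    exact hFπ g _ (hB_mem x).1
  refine ⟨A ∘L F.starProjection, fun x => hAF (F.starProjection_apply_mem x),
    fun x hx => by simp [(starProjection_apply_eq_zero_iff F).2 hx], fun g x hx => ?_,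
    fun x hx => ?_⟩
  · simp [starProjection_eq_self_iff.2 hx, starProjection_eq_self_iff.2 (hFπ g x hx), hA_apply]
  · simp [starProjection_eq_self_iff.2 hx.1, hA_eq x hx.2]

/-- **Subrepresentations of strict ground state representations are strict**
(cf. Prop. 2.13).  Let `(π, H)` be a strict ground state representation of `(G,α)` and
let `(ρ, F)` be the subrepresentation on a closed invariant subspace `F` which is itself
a ground state representation with minimal energy space `F⁰ = F ∩ H⁰`.  Then `(ρ, F)` is
strict: every bounded operator on `F⁰` commuting with `ρ⁰(G⁰)` extends to a bounded
operator on `F` commuting with `ρ(G)`. -/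
theorem stmt_11 {G : Type*} [Group G]
    {H : Type*} [NormedAddCommGroup H] [InnerProductSpace ℂ H] [CompleteSpace H]
    (α : ℝ → G → G)
    (π : G → H →L[ℂ] H) (U : ℝ → H →L[ℂ] H)
    (hgs : IsGroundStateRep α π U) (hstr : IsStrict α π U)
    (F : Submodule ℂ H) (hFclosed : IsClosed (F : Set H))
    (hFπ : ∀ g : G, ∀ x ∈ F, π g x ∈ F)
    (hFU : ∀ t : ℝ, ∀ x ∈ F, U t x ∈ F)
    -- the subrepresentation on `F` is a ground state representation with `F⁰ = F ∩ H⁰`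
    (hFtotal : (Submodule.span ℂ {y : H | ∃ (g : G) (x : H),
        x ∈ F ⊓ fixedPts U ∧ y = π g x}).topologicalClosure = F) :
    ∀ B : H →L[ℂ] H,
      (∀ x : H, B x ∈ F ⊓ fixedPts U) →
      (∀ x ∈ (F ⊓ fixedPts U)ᗮ, B x = 0) →
      (∀ g : G, (∀ t : ℝ, α t g = g) → ∀ x ∈ F ⊓ fixedPts U, B (π g x) = π g (B x)) →
      ∃ A : H →L[ℂ] H,
        (∀ x : H, A x ∈ F) ∧ (∀ x ∈ Fᗮ, A x = 0) ∧
        (∀ g : G, ∀ x ∈ F, A (π g x) = π g (A x)) ∧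
        (∀ x ∈ F ⊓ fixedPts U, A x = B x) :=
  stmt_11_general α π U hgs hstr F hFπ hFtotal
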